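/- arXiv:2406.10592 — 2 statements merged into one kernel-verified Lean document; each statement's English description precedes it below -/
import Mathlib

section
/- Let μ > 0 and f : [0,∞) → ℝ be continuous such that the improper Riemann integrals ∫₀^∞ sin(μs) f(s) ds and ∫₀^∞ cos(μs) f(s) ds converge. If y : [0,∞) → ℝ satisfies y'' + μ² y = f with initial values y(0) = (1/μ)∫₀^∞ sin(μs) f(s) ds and y'(0) = −∫₀^∞ cos(μs) f(s) ds, then y(t) → 0 as t → ∞. -/
open Real Filter MeasureTheory

/-! Variation of constants: along a solution of `y'' + μ² y = f`, the quantities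
`A = μ y sin(μt) + y' cos(μt)` and `B = μ y cos(μt) - y' sin(μt)` have derivatives
`cos(μt) f` and `-sin(μt) f`, and `μ y = A sin(μt) + B cos(μt)`. The initial values are chosen so
that `A(t) = -∫_t^∞ cos(μs) f(s) ds` and `B(t) = ∫_t^∞ sin(μs) f(s) ds`; these tails of convergent
integrals tend to `0`, hence so does `y`. -/

section HarmonicOscillator

variable {μ : ℝ} {f y y' : ℝ → ℝ}

lemma hasDerivAt_sin_const_mul (μ t : ℝ) :
    HasDerivAt (fun t => sin (μ * t)) (μ * cos (μ * t)) t := by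
  simpa [mul_comm] using (hasDerivAt_const_mul (x := t) μ).sin

lemma hasDerivAt_cos_const_mul (μ t : ℝ) :
    HasDerivAt (fun t => cos (μ * t)) (-(μ * sin (μ * t))) t := by
  simpa [mul_comm] using (hasDerivAt_const_mul (x := t) μ).cos

lemma HasDerivAt.mul_sin_add_mul_cos {t : ℝ} (hy : HasDerivAt y (y' t) t)
    (hy' : HasDerivAt y' (f t - μ ^ 2 * y t) t) :
    HasDerivAt (fun t => μ * y t * Real.sin (μ * t) + y' t * Real.cos (μ * t))
      (Real.cos (μ * t) * f t) t :=
  (((hy.const_mul μ).mul (hasDerivAt_sin_const_mul μ t)).add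
    (hy'.mul (hasDerivAt_cos_const_mul μ t))).congr_deriv (by ring)

lemma HasDerivAt.mul_cos_sub_mul_sin {t : ℝ} (hy : HasDerivAt y (y' t) t)
    (hy' : HasDerivAt y' (f t - μ ^ 2 * y t) t) :
    HasDerivAt (fun t => μ * y t * Real.cos (μ * t) - y' t * Real.sin (μ * t))
      (-(Real.sin (μ * t) * f t)) t :=
  (((hy.const_mul μ).mul (hasDerivAt_cos_const_mul μ t)).sub
    (hy'.mul (hasDerivAt_sin_const_mul μ t))).congr_deriv (by ring)

lemma mul_eq_sin_mul_add_cos_mul_of_hasDerivAt (hf : Continuous f)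
    (hy : ∀ t ∈ Set.Ici (0:ℝ), HasDerivAt y (y' t) t)
    (hy' : ∀ t ∈ Set.Ici (0:ℝ), HasDerivAt y' (f t - μ ^ 2 * y t) t) {t : ℝ} (ht : 0 ≤ t) :
    μ * y t = sin (μ * t) * (y' 0 + ∫ s in (0:ℝ)..t, cos (μ * s) * f s)
      + cos (μ * t) * (μ * y 0 - ∫ s in (0:ℝ)..t, sin (μ * s) * f s) := by
  have hIcc : ∀ s ∈ Set.uIcc 0 t, s ∈ Set.Ici (0:ℝ) := fun s hs =>
    (Set.uIcc_of_le ht ▸ hs).1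
  have hcos := intervalIntegral.integral_eq_sub_of_hasDerivAt
    (fun s hs => (hy s (hIcc s hs)).mul_sin_add_mul_cos (hy' s (hIcc s hs)))
    ((by fun_prop : Continuous fun s => cos (μ * s) * f s).intervalIntegrable 0 t)
  have hsin := intervalIntegral.integral_eq_sub_of_hasDerivAt
    (fun s hs => (hy s (hIcc s hs)).mul_cos_sub_mul_sin (hy' s (hIcc s hs)))
    ((by fun_prop : Continuous fun s => -(sin (μ * s) * f s)).intervalIntegrable 0 t)
  simp only [intervalIntegral.integral_neg, mul_zero, sin_zero, cos_zero, mul_one,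
    sub_zero] at hcos hsin
  rw [hcos, neg_eq_iff_eq_neg.mp hsin]
  linear_combination (-(μ * y t)) * sin_sq_add_cos_sq (μ * t)

lemma tendsto_sin_mul_add_cos_mul_of_tendsto_zero {a b : ℝ → ℝ}
    (ha : Tendsto a atTop (nhds 0)) (hb : Tendsto b atTop (nhds 0)) :
    Tendsto (fun t => sin (μ * t) * a t + cos (μ * t) * b t) atTop (nhds 0) := by
  have hsin : IsBoundedUnder (· ≤ ·) atTop ((‖·‖) ∘ fun t => sin (μ * t)) :=
    isBoundedUnder_of ⟨1, fun t => abs_sin_le_one _⟩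
  have hcos : IsBoundedUnder (· ≤ ·) atTop ((‖·‖) ∘ fun t => cos (μ * t)) :=
    isBoundedUnder_of ⟨1, fun t => abs_cos_le_one _⟩
  simpa using (isBoundedUnder_le_mul_tendsto_zero hsin ha).add
    (isBoundedUnder_le_mul_tendsto_zero hcos hb)

end HarmonicOscillator

theorem stmt0 (μ : ℝ) (hμ : 0 < μ) (f y y' : ℝ → ℝ) (hf : Continuous f)
    (I₁ I₂ : ℝ)
    (hI₁ : Tendsto (fun T => ∫ s in (0:ℝ)..T, Real.sin (μ * s) * f s) atTop (nhds I₁))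
    (hI₂ : Tendsto (fun T => ∫ s in (0:ℝ)..T, Real.cos (μ * s) * f s) atTop (nhds I₂))
    (hy : ∀ t ∈ Set.Ici (0:ℝ), HasDerivAt y (y' t) t)
    (hy' : ∀ t ∈ Set.Ici (0:ℝ), HasDerivAt y' (f t - μ ^ 2 * y t) t)
    (h0 : y 0 = (1 / μ) * I₁) (h0' : y' 0 = -I₂) :
    Tendsto y atTop (nhds 0) := by
  have hμy0 : μ * y 0 = I₁ := by rw [h0]; field_simp
  have hμy : Tendsto (fun t => μ * y t) atTop (nhds 0) := by
    refine (tendsto_sin_mul_add_cos_mul_of_tendsto_zero (μ := μ) ?_ ?_).congr'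
      ((eventually_ge_atTop 0).mono fun t ht =>
        (mul_eq_sin_mul_add_cos_mul_of_hasDerivAt hf hy hy' ht).symm)
    · simpa [h0', neg_add_eq_sub] using hI₂.sub_const I₂
    · simpa [hμy0] using hI₁.const_sub I₁
  simpa [hμ.ne'] using hμy.const_mul μ⁻¹
end

section
/- Let μ > 0 and f : [0,∞) → ℝ be continuous such that the improper integrals ∫₀^∞ sin(μs) f(s) ds and ∫₀^∞ cos(μs) f(s) ds converge. If y satisfies y'' + μ² y = f on [0,∞) and y(t) → 0 as t → ∞, then necessarily y(0) = (1/μ)∫₀^∞ sin(μs) f(s) ds and y'(0) = −∫₀^∞ cos(μs) f(s) ds. -/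
/-!
For a phase `φ`, the Wronskian `W t = sin (μ t + φ) y' t - μ cos (μ t + φ) y t` of `sin (μ · + φ)`
and `y` has derivative `sin (μ t + φ) f t`, so `W T → W 0 + ∫₀^∞ sin (μ s + φ) f s ds`. Since
`y → 0`, also `sin (μ T + φ) y' T` converges to this limit; it vanishes at the zeros of the sine,
which are unbounded, so the limit is `0`. The phases `φ = 0` and `φ = π / 2` give `y 0` and `y' 0`.
-/

open Real Filter MeasureTheory

theorem hasDerivAt_wronskian {q f u u' y y' : ℝ → ℝ} {t : ℝ}
    (hu : HasDerivAt u (u' t) t) (hu' : HasDerivAt u' (-(q t * u t)) t)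
    (hy : HasDerivAt y (y' t) t) (hy' : HasDerivAt y' (f t - q t * y t) t) :
    HasDerivAt (fun s => u s * y' s - u' s * y s) (u t * f t) t :=
  ((hu.mul hy').sub (hu'.mul hy)).congr_deriv (by ring)

theorem tendsto_add_of_hasDerivAt_of_tendsto_integral {F g : ℝ → ℝ} {a I : ℝ}
    (hF : ∀ t ∈ Set.Ici a, HasDerivAt F (g t) t) (hg : ∀ T, IntervalIntegrable g volume a T)
    (hI : Tendsto (fun T => ∫ s in a..T, g s) atTop (nhds I)) :
    Tendsto F atTop (nhds (F a + I)) := by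
  refine (tendsto_const_nhds.add hI).congr' ?_
  filter_upwards [eventually_ge_atTop a] with T hT
  rw [intervalIntegral.integral_eq_sub_of_hasDerivAt
    (fun t ht => hF t (Set.uIcc_of_le hT ▸ ht).1) (hg T)]
  ring

theorem frequently_sin_mul_add_eq_zero {μ : ℝ} (hμ : 0 < μ) (φ : ℝ) :
    ∃ᶠ t in atTop, sin (μ * t + φ) = 0 := by
  have hroots : Tendsto (fun n : ℕ => (n * π - φ) / μ) atTop atTop :=
    (tendsto_atTop_add_const_right _ (-φ)
      (tendsto_natCast_atTop_atTop.atTop_mul_const pi_pos)).atTop_div_const hμ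
  refine hroots.frequently (Eventually.frequently (Eventually.of_forall fun n => ?_))
  rw [mul_div_cancel₀ _ hμ.ne', sub_add_cancel, sin_nat_mul_pi]

theorem eq_zero_of_tendsto_sin_mul_add_mul {μ φ L : ℝ} (hμ : 0 < μ) {g : ℝ → ℝ}
    (h : Tendsto (fun t => sin (μ * t + φ) * g t) atTop (nhds L)) : L = 0 :=
  tendsto_nhds_unique_of_frequently_eq h tendsto_const_nhds
    ((frequently_sin_mul_add_eq_zero hμ φ).mono fun t ht => by simp [ht])

theorem limit_integral_sin_mul_add_mul_eq {μ φ I : ℝ} (hμ : 0 < μ) {f y y' : ℝ → ℝ}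
    (hf : Continuous f)
    (hy : ∀ t ∈ Set.Ici (0:ℝ), HasDerivAt y (y' t) t)
    (hy' : ∀ t ∈ Set.Ici (0:ℝ), HasDerivAt y' (f t - μ ^ 2 * y t) t)
    (hdecay : Tendsto y atTop (nhds 0))
    (hI : Tendsto (fun T => ∫ s in (0:ℝ)..T, sin (μ * s + φ) * f s) atTop (nhds I)) :
    I = μ * cos φ * y 0 - sin φ * y' 0 := by
  set u : ℝ → ℝ := fun t => sin (μ * t + φ)
  set u' : ℝ → ℝ := fun t => μ * cos (μ * t + φ)
  have hu : ∀ t, HasDerivAt u (u' t) t := fun t => by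
    simpa [u, u', mul_comm] using ((hasDerivAt_id t).const_mul μ |>.add_const φ).sin
  have hu' : ∀ t, HasDerivAt u' (-(μ ^ 2 * u t)) t := fun t => by
    have := (((hasDerivAt_id t).const_mul μ |>.add_const φ).cos).const_mul μ
    exact this.congr_deriv (by simp only [u, id]; ring)
  have hW := tendsto_add_of_hasDerivAt_of_tendsto_integral
    (fun t ht => hasDerivAt_wronskian (q := fun _ => μ ^ 2) (hu t) (hu' t) (hy t ht) (hy' t ht))
    (fun T => ((continuous_sin.comp ((continuous_const.mul continuous_id).add
      continuous_const)).mul hf).intervalIntegrable 0 T) hI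
  have hu'y : Tendsto (fun t => u' t * y t) atTop (nhds 0) :=
    isBoundedUnder_le_mul_tendsto_zero (isBoundedUnder_of ⟨|μ|, fun t => by
      simpa [u', abs_mul] using mul_le_mul_of_nonneg_left (abs_cos_le_one (μ * t + φ))
        (abs_nonneg μ)⟩) hdecay
  have hW0 := eq_zero_of_tendsto_sin_mul_add_mul (g := y') hμ
    ((hW.add hu'y).congr fun t => by simp only [u]; ring)
  simp only [u, u', mul_zero, zero_add] at hW0
  linarith

theorem stmt1 (μ : ℝ) (hμ : 0 < μ) (f y y' : ℝ → ℝ) (hf : Continuous f)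
    (I₁ I₂ : ℝ)
    (hI₁ : Tendsto (fun T => ∫ s in (0:ℝ)..T, Real.sin (μ * s) * f s) atTop (nhds I₁))
    (hI₂ : Tendsto (fun T => ∫ s in (0:ℝ)..T, Real.cos (μ * s) * f s) atTop (nhds I₂))
    (hy : ∀ t ∈ Set.Ici (0:ℝ), HasDerivAt y (y' t) t)
    (hy' : ∀ t ∈ Set.Ici (0:ℝ), HasDerivAt y' (f t - μ ^ 2 * y t) t)
    (hdecay : Tendsto y atTop (nhds 0)) :
    y 0 = (1 / μ) * I₁ ∧ y' 0 = -I₂ := by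
  have h₁ := limit_integral_sin_mul_add_mul_eq (φ := 0) hμ hf hy hy' hdecay
    (by simpa only [add_zero] using hI₁)
  have h₂ := limit_integral_sin_mul_add_mul_eq (φ := π / 2) hμ hf hy hy' hdecay
    (by simpa only [sin_add_pi_div_two] using hI₂)
  simp only [sin_zero, cos_zero, sin_pi_div_two, cos_pi_div_two] at h₁ h₂
  constructor
  · field_simp
    linarith
  · linarith
end
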